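/- Let h : ℝ^m → ℝ^n be differentiable at a point a ∈ ℝ^m, and define the NICE coupling map f : ℝ^m × ℝ^n → ℝ^m × ℝ^n by f(a, b) = (a, b + h(a)). Then for every b ∈ ℝ^n, f is differentiable at (a, b), its Fréchet derivative is the linear map (x, y) ↦ (x, y + Dh(a)·x) (a block lower-triangular linear map), and the determinant of this derivative equals 1. -/

import Mathlib

open ContinuousLinearMap

/-- **The NICE coupling map has a block lower-triangular derivative of determinant 1.**
If `h : ℝ^m → ℝ^n` has Fréchet derivative `h'` at `a`, then for every `b` the NICE
coupling map `f (a, b) = (a, b + h a)` is differentiable at `(a, b)`, its derivative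
is the linear map `(x, y) ↦ (x, y + h' x)`, and the determinant of this derivative
(as a linear endomorphism of `ℝ^m × ℝ^n`) equals `1`. -/
theorem nice_coupling_hasFDerivAt_det_one (m n : ℕ)
    (h : (Fin m → ℝ) → (Fin n → ℝ)) (a : Fin m → ℝ)
    (h' : (Fin m → ℝ) →L[ℝ] (Fin n → ℝ)) (hh : HasFDerivAt h h' a) (b : Fin n → ℝ) :
    HasFDerivAt (fun z : (Fin m → ℝ) × (Fin n → ℝ) => (z.1, z.2 + h z.1))
      ((fst ℝ (Fin m → ℝ) (Fin n → ℝ)).prod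
        (snd ℝ (Fin m → ℝ) (Fin n → ℝ) + h'.comp (fst ℝ (Fin m → ℝ) (Fin n → ℝ))))
      (a, b) ∧
    LinearMap.det
      (((fst ℝ (Fin m → ℝ) (Fin n → ℝ)).prod
        (snd ℝ (Fin m → ℝ) (Fin n → ℝ) +
          h'.comp (fst ℝ (Fin m → ℝ) (Fin n → ℝ)))).toLinearMap) = 1 := by
  constructor
  · exact HasFDerivAt.prodMk hasFDerivAt_fst (HasFDerivAt.add hasFDerivAt_snd (hh.comp _ hasFDerivAt_fst))
  · set bm := Pi.basisFun ℝ (Fin m)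
    set bn := Pi.basisFun ℝ (Fin n)
    set T := ((fst ℝ (Fin m → ℝ) (Fin n → ℝ)).prod
        (snd ℝ (Fin m → ℝ) (Fin n → ℝ) +
          h'.comp (fst ℝ (Fin m → ℝ) (Fin n → ℝ)))).toLinearMap
    rw [← LinearMap.det_toMatrix (bm.prod bn)]
    have : LinearMap.toMatrix (bm.prod bn) (bm.prod bn) T =
        Matrix.fromBlocks 1 0 (LinearMap.toMatrix bm bn h'.toLinearMap) 1 := by
      ext i j
      cases i <;> cases j <;>
        simp [LinearMap.toMatrix_apply, Module.Basis.prod_apply, T, Matrix.one_apply,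
          Module.Basis.prod_repr_inl, Module.Basis.prod_repr_inr, Pi.basisFun_apply, Pi.basisFun_repr,
          Pi.single_apply, Finsupp.single_apply, eq_comm]
    rw [this, Matrix.det_fromBlocks_zero₁₂, Matrix.det_one, Matrix.det_one, one_mul]
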